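/- Let P(x) = x⁴ + a₂x² + a₁x + a₀ over a field of characteristic zero and set Q(x) = (1/3)·P(x)·P''(x) − (1/4)·P'(x)². Then the resultant-based discriminants satisfy Discr_x(Q) = g²·Discr_x(P), where g = a₁² + (2/27)a₂³ − (8/3)a₀a₂ is the value S(0) of S(ξ) = ξ³ + fξ + g with f = −4a₀ − (1/3)a₂². -/
import Mathlib


/-- The discriminant of the quartic `a·x⁴ + b·x³ + c·x² + d·x + e`, given by the standard
closed formula (equal to `Res_x(P, P')/a` up to the usual sign normalization). -/
def quarticDisc {K : Type*} [CommRing K] (a b c d e : K) : K :=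
  256 * a ^ 3 * e ^ 3 - 192 * a ^ 2 * b * d * e ^ 2 - 128 * a ^ 2 * c ^ 2 * e ^ 2
    + 144 * a ^ 2 * c * d ^ 2 * e - 27 * a ^ 2 * d ^ 4 + 144 * a * b ^ 2 * c * e ^ 2
    - 6 * a * b ^ 2 * d ^ 2 * e - 80 * a * b * c ^ 2 * d * e + 18 * a * b * c * d ^ 3
    + 16 * a * c ^ 4 * e - 4 * a * c ^ 3 * d ^ 2 - 27 * b ^ 4 * e ^ 2
    + 18 * b ^ 3 * c * d * e - 4 * b ^ 3 * d ^ 3 - 4 * b ^ 2 * c ^ 3 * e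
    + b ^ 2 * c ^ 2 * d ^ 2

/-- for the monic quartic `P(x) = x⁴ + a₂x² + a₁x + a₀` and
`Q(x) = (1/3)·P·P'' − (1/4)·P'²` (which is the quartic
`(2a₂/3)x⁴ + 2a₁x³ + (4a₀ − a₂²/3)x² − (a₁a₂/3)x + (2a₀a₂/3 − a₁²/4)`), one has
`Discr_x(Q) = g²·Discr_x(P)` where `g = S(0)` for `S(ξ) = ξ³ + fξ + g`,
`f = −4a₀ − a₂²/3`, `g = a₁² + (2/27)a₂³ − (8/3)a₀a₂`. -/
theorem disc_Q_eq_S0_sq_mul_disc_P {K : Type*} [Field K] [CharZero K] (a₀ a₁ a₂ : K) :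
    quarticDisc (2 * a₂ / 3) (2 * a₁) (4 * a₀ - a₂ ^ 2 / 3) (-(a₁ * a₂) / 3)
        (2 * a₀ * a₂ / 3 - a₁ ^ 2 / 4) =
      (a₁ ^ 2 + (2 / 27) * a₂ ^ 3 - (8 / 3) * a₀ * a₂) ^ 2
        * quarticDisc 1 0 a₂ a₁ a₀ := by
  unfold quarticDisc
  field_simp
  ring
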